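/- arXiv:1710.03841 — 2 statements merged into one kernel-verified Lean document; each statement's English description precedes it below -/
import Mathlib

section
/- Let E be a compact metric space, Ω = E^ℕ, p a fully supported Borel probability measure on E, f ∈ C(Ω), L_f the Ruelle operator, P(f) the pressure, and λ_f = exp(P(f)). Suppose there exists a Baire-class-one function ψ : Ω → ℝ (a pointwise limit of a sequence of continuous functions) and constants 0 < m ≤ M < ∞ with m ≤ ψ(x) ≤ M for all x ∈ Ω, such that ∫_E exp(f(a·x)) ψ(a·x) dp(a) = λ_f ψ(x) for every x ∈ Ω. Then there exists a nonzero positive element ξ ∈ C(Ω)** (positive meaning ξ(g) ≥ 0 for every g ∈ C(Ω)* with g(φ) ≥ 0 whenever φ ≥ 0 pointwise) such that L_f** ξ = λ_f ξ. -/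
/-!
Positivity of `L_f` and `L_f ψ = λ ψ` pin the iterates between multiples of the eigenfunction,
`λⁿ ψ / M ≤ L_fⁿ 1 ≤ λⁿ ψ / m`, hence `(m / M) λⁿ ≤ L_fⁿ 1 ≤ (M / m) λⁿ`. So the normalized orbit
`λ⁻ⁿ L_fⁿ 1` is bounded in `C(Ω)` and bounded away from `0`, and `ξ g := LIM g (λ⁻ⁿ L_fⁿ 1)`, for
a Banach limit `LIM` (an ultrafilter limit of Cesàro means), is a functional on `C(Ω)*`.
Shift invariance of `LIM` gives `L_f** ξ = λ ξ`; the lower bound makes `ξ` positive and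
`ξ(δₓ) ≥ m / M`.
-/

open MeasureTheory Filter Topology NormedSpace

noncomputable section

/-- The sequence `(a, x₁, x₂, …)` obtained by prepending `a` to `x`. -/
def cons {E : Type*} (a : E) (x : ℕ → E) : ℕ → E := fun n => Nat.casesOn n a x

def cesaroMean (s : ℕ → ℝ) (n : ℕ) : ℝ := (n : ℝ)⁻¹ * ∑ k ∈ Finset.range n, s k

lemma cesaroMean_add (s t : ℕ → ℝ) : cesaroMean (s + t) = cesaroMean s + cesaroMean t := by
  ext n
  simp only [cesaroMean, Pi.add_apply, Finset.sum_add_distrib, mul_add]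

lemma cesaroMean_smul (c : ℝ) (s : ℕ → ℝ) : cesaroMean (c • s) = c • cesaroMean s := by
  ext n
  simp only [cesaroMean, Pi.smul_apply, smul_eq_mul, ← Finset.mul_sum]
  ring

lemma abs_cesaroMean_le {s : ℕ → ℝ} {C : ℝ} (hs : ∀ k, |s k| ≤ C) (n : ℕ) :
    |cesaroMean s n| ≤ C := by
  rcases n.eq_zero_or_pos with rfl | hn
  · simpa [cesaroMean] using (abs_nonneg _).trans (hs 0)
  have hn' : (0 : ℝ) < n := by exact_mod_cast hn
  calc |cesaroMean s n| ≤ (n : ℝ)⁻¹ * ∑ k ∈ Finset.range n, |s k| := by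
        rw [cesaroMean, abs_mul, abs_of_pos (inv_pos.mpr hn')]
        gcongr
        exact Finset.abs_sum_le_sum_abs _ _
    _ ≤ (n : ℝ)⁻¹ * (n * C) := by
        gcongr
        simpa using Finset.sum_le_sum fun k (_ : k ∈ Finset.range n) => hs k
    _ = C := by field_simp

lemma le_cesaroMean {s : ℕ → ℝ} {c : ℝ} (hs : ∀ k, c ≤ s k) {n : ℕ} (hn : 0 < n) :
    c ≤ cesaroMean s n := by
  have hn' : (0 : ℝ) < n := by exact_mod_cast hn
  rw [cesaroMean, le_inv_mul_iff₀ hn']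
  simpa [mul_comm] using Finset.sum_le_sum fun k (_ : k ∈ Finset.range n) => hs k

lemma tendsto_cesaroMean_shift_sub {s : ℕ → ℝ} {C : ℝ} (hs : ∀ k, |s k| ≤ C) :
    Tendsto (fun n => cesaroMean (fun k => s (k + 1)) n - cesaroMean s n) atTop (𝓝 0) := by
  have htel : ∀ n, cesaroMean (fun k => s (k + 1)) n - cesaroMean s n
      = (s n - s 0) * (n : ℝ)⁻¹ := by
    intro n
    have := Finset.sum_range_succ_sub_sum s (n := n)
    rw [Finset.sum_range_succ'] at this
    simp only [cesaroMean]
    linear_combination (n : ℝ)⁻¹ * this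
  simp_rw [htel]
  refine squeeze_zero_norm (a := fun n : ℕ => 2 * C * (n : ℝ)⁻¹) (fun n => ?_) ?_
  · rw [Real.norm_eq_abs, abs_mul, abs_inv, Nat.abs_cast]
    gcongr
    linarith [abs_sub (s n) (s 0), hs n, hs 0]
  · simpa using (tendsto_inv_atTop_zero.comp tendsto_natCast_atTop_atTop).const_mul (2 * C)

open BoundedContinuousFunction

lemma BoundedContinuousFunction.abs_apply_le_norm {α : Type*} [TopologicalSpace α] (s : α →ᵇ ℝ)
    (x : α) : |s x| ≤ ‖s‖ :=
  (Real.norm_eq_abs (s x)).symm.trans_le (s.norm_coe_le_norm x)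

lemma exists_tendsto_cesaroMean (s : ℕ →ᵇ ℝ) :
    ∃ l, Tendsto (cesaroMean s) (Ultrafilter.of (atTop : Filter ℕ)) (𝓝 l) := by
  have hmem : ∀ n, cesaroMean s n ∈ Metric.closedBall 0 ‖s‖ := fun n => by
    simpa using abs_cesaroMean_le s.abs_apply_le_norm n
  obtain ⟨l, -, hl⟩ := (isCompact_closedBall (0 : ℝ) ‖s‖).ultrafilter_le_nhds
    ((Ultrafilter.of atTop).map (cesaroMean s)) (tendsto_principal.2 (.of_forall hmem))
  exact ⟨l, hl⟩

def banachLimitFun (s : ℕ →ᵇ ℝ) : ℝ :=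
  limUnder (Ultrafilter.of (atTop : Filter ℕ) : Filter ℕ) (cesaroMean s)

lemma tendsto_banachLimitFun (s : ℕ →ᵇ ℝ) :
    Tendsto (cesaroMean s) (Ultrafilter.of (atTop : Filter ℕ)) (𝓝 (banachLimitFun s)) :=
  tendsto_nhds_limUnder (exists_tendsto_cesaroMean s)

lemma banachLimitFun_eq {s : ℕ →ᵇ ℝ} {l : ℝ}
    (h : Tendsto (cesaroMean s) (Ultrafilter.of (atTop : Filter ℕ)) (𝓝 l)) :
    banachLimitFun s = l :=
  tendsto_nhds_unique (tendsto_banachLimitFun s) h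

def banachLimit : (ℕ →ᵇ ℝ) →L[ℝ] ℝ :=
  LinearMap.mkContinuous
    { toFun := banachLimitFun
      map_add' := fun s t => banachLimitFun_eq <| by
        rw [coe_add, cesaroMean_add]
        exact (tendsto_banachLimitFun s).add (tendsto_banachLimitFun t)
      map_smul' := fun c s => banachLimitFun_eq <| by
        change Tendsto (cesaroMean (c • ⇑s)) _ _
        rw [cesaroMean_smul]
        exact (tendsto_banachLimitFun s).const_smul c }
    1 fun s => by
      rw [one_mul, ← mem_closedBall_zero_iff]
      exact Metric.isClosed_closedBall.mem_of_tendsto (tendsto_banachLimitFun s) <|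
        .of_forall fun n => by simpa using abs_cesaroMean_le s.abs_apply_le_norm n

lemma tendsto_banachLimit (s : ℕ →ᵇ ℝ) :
    Tendsto (cesaroMean s) (Ultrafilter.of (atTop : Filter ℕ)) (𝓝 (banachLimit s)) :=
  tendsto_banachLimitFun s

lemma le_banachLimit {s : ℕ →ᵇ ℝ} {c : ℝ} (hs : ∀ k, c ≤ s k) : c ≤ banachLimit s := by
  have hpos : ∀ᶠ n in (Ultrafilter.of (atTop : Filter ℕ) : Filter ℕ), 0 < n :=
    Ultrafilter.of_le atTop (eventually_gt_atTop 0)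
  exact ge_of_tendsto (tendsto_banachLimit s) (hpos.mono fun _ hn => le_cesaroMean hs hn)

lemma banachLimit_eq_of_shift {s t : ℕ →ᵇ ℝ} (hst : ∀ k, t k = s (k + 1)) :
    banachLimit t = banachLimit s := by
  rw [← sub_eq_zero, ← map_sub]
  refine banachLimitFun_eq ?_
  rw [coe_sub, sub_eq_add_neg, ← neg_one_smul ℝ (s : ℕ → ℝ), cesaroMean_add, cesaroMean_smul,
    neg_one_smul, ← sub_eq_add_neg, funext hst]
  exact (tendsto_cesaroMean_shift_sub s.abs_apply_le_norm).mono_left (Ultrafilter.of_le atTop)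

section Bidual

variable {X : Type*} [NormedAddCommGroup X] [NormedSpace ℝ X]

def dualPairingSeq (w : ℕ → X) {C : ℝ} (hw : ∀ k, ‖w k‖ ≤ C) :
    StrongDual ℝ X →L[ℝ] (ℕ →ᵇ ℝ) :=
  LinearMap.mkContinuous
    { toFun := fun g => ofNormedAddCommGroupDiscrete (fun k => g (w k)) (‖g‖ * C)
        fun k => (g.le_opNorm _).trans (by gcongr; exact hw k)
      map_add' := fun _ _ => rfl
      map_smul' := fun _ _ => rfl }
    C fun g => (norm_le (mul_nonneg ((norm_nonneg _).trans (hw 0)) (norm_nonneg g))).2 fun k =>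
      ((g.le_opNorm _).trans (by gcongr; exact hw k)).trans_eq (mul_comm _ _)

@[simp]
lemma dualPairingSeq_apply (w : ℕ → X) {C : ℝ} (hw : ∀ k, ‖w k‖ ≤ C) (g : StrongDual ℝ X)
    (k : ℕ) : dualPairingSeq w hw g k = g (w k) :=
  rfl

theorem exists_bidual_eigenvector_of_orbit_le (T : X →L[ℝ] X) {r : ℝ} (hr : 0 < r) (v : X)
    {C : ℝ} (hC : ∀ n, ‖(T ^ n) v‖ ≤ C * r ^ n) :
    ∃ ξ : StrongDual ℝ (StrongDual ℝ X), (∀ g, ξ (g.comp T) = r * ξ g) ∧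
      ∀ (g : StrongDual ℝ X) (c : ℝ), (∀ n, c * r ^ n ≤ g ((T ^ n) v)) → c ≤ ξ g := by
  set w : ℕ → X := fun n => (r ^ n)⁻¹ • (T ^ n) v
  have hw : ∀ n, ‖w n‖ ≤ C := fun n => by
    have hrn : 0 < r ^ n := pow_pos hr n
    rw [norm_smul, norm_inv, Real.norm_of_nonneg hrn.le, inv_mul_le_iff₀ hrn, mul_comm]
    exact hC n
  refine ⟨banachLimit.comp (dualPairingSeq w hw), fun g => ?_, fun g c hc => ?_⟩
  · have hshift : ∀ k, dualPairingSeq w hw (r⁻¹ • g.comp T) k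
        = dualPairingSeq w hw g (k + 1) := fun k => by
      rw [map_smul, BoundedContinuousFunction.smul_apply, dualPairingSeq_apply,
        dualPairingSeq_apply, ContinuousLinearMap.comp_apply]
      simp only [w, map_smul, smul_eq_mul, pow_succ', mul_inv, mul_assoc]
      rfl
    have := banachLimit_eq_of_shift hshift
    rw [map_smul, map_smul, smul_eq_mul, inv_mul_eq_iff_eq_mul₀ hr.ne'] at this
    simpa only [ContinuousLinearMap.comp_apply] using this
  · rw [ContinuousLinearMap.comp_apply]
    refine le_banachLimit fun k => ?_
    rw [dualPairingSeq_apply, map_smul, smul_eq_mul, le_inv_mul_iff₀ (pow_pos hr k), mul_comm]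
    exact hc k

end Bidual

section Ruelle

variable {E : Type*} [TopologicalSpace E]

lemma continuous_cons (x : ℕ → E) : Continuous fun a : E => cons a x :=
  continuous_pi fun n => by cases n; exacts [continuous_id, continuous_const]

variable [MeasurableSpace E] [OpensMeasurableSpace E] {p : Measure E}

lemma measurable_comp_cons_of_tendsto {ψ : (ℕ → E) → ℝ} {u : ℕ → C(ℕ → E, ℝ)}
    (hu : ∀ y, Tendsto (fun n => u n y) atTop (𝓝 (ψ y))) (x : ℕ → E) :
    Measurable fun a => ψ (cons a x) :=
  measurable_of_tendsto_metrizable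
    (fun n => ((u n).continuous.comp (continuous_cons x)).measurable)
    (tendsto_pi_nhds.2 fun a => hu (cons a x))

variable [CompactSpace E]

lemma integrable_exp_mul_comp_cons [IsFiniteMeasure p] (f : C(ℕ → E, ℝ))
    {h : (ℕ → E) → ℝ} {C : ℝ} (x : ℕ → E) (hmeas : Measurable fun a => h (cons a x))
    (hC : ∀ y, |h y| ≤ C) :
    Integrable (fun a => Real.exp (f (cons a x)) * h (cons a x)) p := by
  refine (integrable_const (Real.exp ‖f‖ * C)).mono'
    ((Real.measurable_exp.comp ((f.continuous.comp (continuous_cons x)).measurable)).mul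
      hmeas).aestronglyMeasurable (ae_of_all _ fun a => ?_)
  rw [norm_mul, Real.norm_of_nonneg (Real.exp_pos _).le, Real.norm_eq_abs]
  gcongr
  · exact (le_abs_self _).trans (f.norm_coe_le_norm _)
  · exact hC _

variable [IsFiniteMeasure p] {f : C(ℕ → E, ℝ)} {T : C(ℕ → E, ℝ) →L[ℝ] C(ℕ → E, ℝ)}
  {r : ℝ} {ψ : (ℕ → E) → ℝ}

lemma apply_sub_mul_eq_integral
    (hT : ∀ φ x, T φ x = ∫ a, Real.exp (f (cons a x)) * φ (cons a x) ∂p)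
    (hψ : ∀ x, Integrable (fun a => Real.exp (f (cons a x)) * ψ (cons a x)) p)
    (heig : ∀ x, ∫ a, Real.exp (f (cons a x)) * ψ (cons a x) ∂p = r * ψ x)
    (φ : C(ℕ → E, ℝ)) (c : ℝ) (x : ℕ → E) :
    T φ x - c * (r * ψ x) =
      ∫ a, Real.exp (f (cons a x)) * (φ (cons a x) - c * ψ (cons a x)) ∂p := by
  have hφ := integrable_exp_mul_comp_cons (p := p) f x
    (φ.continuous.comp (continuous_cons x)).measurable φ.norm_coe_le_norm
  simp only [mul_sub, mul_left_comm _ c]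
  rw [integral_sub hφ ((hψ x).const_mul c), integral_const_mul, heig, hT]

lemma apply_mem_Icc_of_forall_mem_Icc
    (hT : ∀ φ x, T φ x = ∫ a, Real.exp (f (cons a x)) * φ (cons a x) ∂p)
    (hψ : ∀ x, Integrable (fun a => Real.exp (f (cons a x)) * ψ (cons a x)) p)
    (heig : ∀ x, ∫ a, Real.exp (f (cons a x)) * ψ (cons a x) ∂p = r * ψ x)
    {φ : C(ℕ → E, ℝ)} {c₁ c₂ : ℝ} (hφ : ∀ y, φ y ∈ Set.Icc (c₁ * ψ y) (c₂ * ψ y)) (x : ℕ → E) :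
    T φ x ∈ Set.Icc (c₁ * (r * ψ x)) (c₂ * (r * ψ x)) := by
  constructor
  · rw [← sub_nonneg, apply_sub_mul_eq_integral hT hψ heig]
    exact integral_nonneg fun a => mul_nonneg (Real.exp_pos _).le (sub_nonneg.2 (hφ _).1)
  · rw [← sub_nonpos, apply_sub_mul_eq_integral hT hψ heig]
    exact integral_nonpos fun a =>
      mul_nonpos_of_nonneg_of_nonpos (Real.exp_pos _).le (sub_nonpos.2 (hφ _).2)

lemma pow_apply_one_mem_Icc_mul
    (hT : ∀ φ x, T φ x = ∫ a, Real.exp (f (cons a x)) * φ (cons a x) ∂p)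
    (hψ : ∀ x, Integrable (fun a => Real.exp (f (cons a x)) * ψ (cons a x)) p)
    (heig : ∀ x, ∫ a, Real.exp (f (cons a x)) * ψ (cons a x) ∂p = r * ψ x)
    {m M : ℝ} (hm : 0 < m) (hM : 0 < M) (hbounds : ∀ x, m ≤ ψ x ∧ ψ x ≤ M) (n : ℕ) (x : ℕ → E) :
    (T ^ n) 1 x ∈ Set.Icc (r ^ n / M * ψ x) (r ^ n / m * ψ x) := by
  induction n generalizing x with
  | zero =>
    simp only [pow_zero, one_apply_eq_self, ContinuousMap.one_apply, one_div_mul_eq_div,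
      Set.mem_Icc, div_le_one hM, one_le_div hm]
    exact ⟨(hbounds x).2, (hbounds x).1⟩
  | succ n ih =>
    have hTn : (T ^ (n + 1)) 1 = T ((T ^ n) 1) := by rw [pow_succ']; rfl
    rw [hTn]
    convert apply_mem_Icc_of_forall_mem_Icc hT hψ heig ih x using 2 <;> ring

lemma pow_apply_one_mem_Icc
    (hT : ∀ φ x, T φ x = ∫ a, Real.exp (f (cons a x)) * φ (cons a x) ∂p)
    (hψ : ∀ x, Integrable (fun a => Real.exp (f (cons a x)) * ψ (cons a x)) p)
    (heig : ∀ x, ∫ a, Real.exp (f (cons a x)) * ψ (cons a x) ∂p = r * ψ x) (hr : 0 ≤ r)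
    {m M : ℝ} (hm : 0 < m) (hM : 0 < M) (hbounds : ∀ x, m ≤ ψ x ∧ ψ x ≤ M) (n : ℕ) (x : ℕ → E) :
    (T ^ n) 1 x ∈ Set.Icc (m / M * r ^ n) (M / m * r ^ n) := by
  obtain ⟨hlower, hupper⟩ := pow_apply_one_mem_Icc_mul hT hψ heig hm hM hbounds n x
  constructor
  · refine le_trans ?_ hlower
    rw [mul_comm, mul_div_assoc', div_mul_eq_mul_div]
    gcongr
    exact (hbounds x).1
  · refine hupper.trans ?_
    rw [mul_comm (M / m), mul_div_assoc', div_mul_eq_mul_div]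
    gcongr
    exact (hbounds x).2

end Ruelle

theorem exists_positive_eigenvector_double_transpose_general
    {E : Type*} [MetricSpace E] [CompactSpace E] [MeasurableSpace E] [BorelSpace E]
    (p : Measure E) [IsProbabilityMeasure p]
    (f : C(ℕ → E, ℝ))
    (T : C(ℕ → E, ℝ) →L[ℝ] C(ℕ → E, ℝ))
    (hT : ∀ (φ : C(ℕ → E, ℝ)) (x : ℕ → E),
      T φ x = ∫ a, Real.exp (f (cons a x)) * φ (cons a x) ∂p)
    (P : ℝ)
    (ψ : (ℕ → E) → ℝ)
    (hBaire : ∃ u : ℕ → C(ℕ → E, ℝ), ∀ x, Tendsto (fun n => u n x) atTop (nhds (ψ x)))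
    (m M : ℝ) (hm : 0 < m) (hmM : m ≤ M)
    (hbounds : ∀ x, m ≤ ψ x ∧ ψ x ≤ M)
    (heig : ∀ x : ℕ → E,
      ∫ a, Real.exp (f (cons a x)) * ψ (cons a x) ∂p = Real.exp P * ψ x) :
    ∃ ξ : StrongDual ℝ (StrongDual ℝ C(ℕ → E, ℝ)), ξ ≠ 0 ∧
      (∀ g : StrongDual ℝ C(ℕ → E, ℝ), (∀ φ : C(ℕ → E, ℝ), 0 ≤ φ → 0 ≤ g φ) → 0 ≤ ξ g) ∧
      (∀ g : StrongDual ℝ C(ℕ → E, ℝ), ξ (g.comp T) = Real.exp P * ξ g) := by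
  have hM : 0 < M := hm.trans_le hmM
  obtain ⟨u, hu⟩ := hBaire
  have hψ (x : ℕ → E) : Integrable (fun a => Real.exp (f (cons a x)) * ψ (cons a x)) p :=
    integrable_exp_mul_comp_cons f x (measurable_comp_cons_of_tendsto hu x)
      fun y => abs_le.2 ⟨by linarith [hbounds y], (hbounds y).2⟩
  have hiter := pow_apply_one_mem_Icc hT hψ heig (Real.exp_pos P).le hm hM hbounds
  have hnonneg (n : ℕ) (x : ℕ → E) : 0 ≤ (T ^ n) 1 x :=
    (by positivity : (0 : ℝ) ≤ _).trans (hiter n x).1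
  have hnorm (n : ℕ) : ‖(T ^ n) 1‖ ≤ M / m * Real.exp P ^ n :=
    (ContinuousMap.norm_le _ (by positivity)).2 fun x =>
      (Real.norm_of_nonneg (hnonneg n x)).trans_le (hiter n x).2
  obtain ⟨ξ, hξT, hξ_le⟩ := exists_bidual_eigenvector_of_orbit_le T (Real.exp_pos P) 1 hnorm
  obtain ⟨x₀⟩ : Nonempty (ℕ → E) := by
    have := nonempty_of_isProbabilityMeasure p
    infer_instance
  refine ⟨ξ, fun hξ => ?_, fun g hg => hξ_le g 0 fun n => ?_, hξT⟩
  · have := hξ_le (ContinuousMap.evalCLM ℝ x₀) (m / M) fun n => (hiter n x₀).1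
    rw [hξ, zero_apply] at this
    exact (div_pos hm hM).not_ge this
  · rw [zero_mul]
    exact hg _ (hnonneg n)

/-- If there is a bounded Baire-class-one eigenfunction `ψ`
(with `0 < m ≤ ψ ≤ M`) of the Ruelle operator associated to `λ_f = exp(P(f))`, then the
double transpose `L_f**` has a nonzero positive eigenvector associated to `λ_f`. -/
theorem exists_positive_eigenvector_double_transpose
    {E : Type*} [MetricSpace E] [CompactSpace E] [MeasurableSpace E] [BorelSpace E]
    (p : Measure E) [IsProbabilityMeasure p]
    (hp : ∀ U : Set E, IsOpen U → U.Nonempty → 0 < p U)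
    (f : C(ℕ → E, ℝ))
    (T : C(ℕ → E, ℝ) →L[ℝ] C(ℕ → E, ℝ))
    (hT : ∀ (φ : C(ℕ → E, ℝ)) (x : ℕ → E),
      T φ x = ∫ a, Real.exp (f (cons a x)) * φ (cons a x) ∂p)
    (P : ℝ)
    (hP : TendstoUniformly (fun (n : ℕ) (x : ℕ → E) => Real.log ((T ^ n) 1 x) / n)
      (fun _ => P) atTop)
    (ψ : (ℕ → E) → ℝ)
    (hBaire : ∃ u : ℕ → C(ℕ → E, ℝ), ∀ x, Tendsto (fun n => u n x) atTop (nhds (ψ x)))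
    (m M : ℝ) (hm : 0 < m) (hmM : m ≤ M)
    (hbounds : ∀ x, m ≤ ψ x ∧ ψ x ≤ M)
    (heig : ∀ x : ℕ → E,
      ∫ a, Real.exp (f (cons a x)) * ψ (cons a x) ∂p = Real.exp P * ψ x) :
    ∃ ξ : StrongDual ℝ (StrongDual ℝ C(ℕ → E, ℝ)), ξ ≠ 0 ∧
      (∀ g : StrongDual ℝ C(ℕ → E, ℝ), (∀ φ : C(ℕ → E, ℝ), 0 ≤ φ → 0 ≤ g φ) → 0 ≤ ξ g) ∧
      (∀ g : StrongDual ℝ C(ℕ → E, ℝ), ξ (g.comp T) = Real.exp P * ξ g) :=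
  exists_positive_eigenvector_double_transpose_general p f T hT P ψ hBaire m M hm hmM hbounds heig
end
end

section
/- (Theorem B) Let E be a compact metric space, Ω = E^ℕ, σ the left shift, p a fully supported Borel probability measure on E, f ∈ C(Ω), L_f the Ruelle operator, λ_f = exp(P(f)), and ν ∈ G*(f). Let μ be a σ-invariant Borel probability measure on Ω with μ absolutely continuous with respect to ν, and let h = dμ/dν be the Radon–Nikodym derivative. Then h is an eigenfunction of the extension of L_f to L¹(Ω, ν) associated to λ_f: for ν-a.e. x ∈ Ω, ∫_E exp(f(a·x)) h(a·x) dp(a) = λ_f · h(x). -/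
/-!
The hypothesis `∫ L_f φ dν = λ_f ∫ φ dν` for continuous `φ` says that the measure `L_f^* ν`
equals `λ_f ν`; as both are finite Borel measures, the identity extends to all nonnegative
measurable `φ`. Since `σ(a·x) = x`, we have `L_f((1_A ∘ σ) h) = 1_A L_f h`, so for `h = dμ/dν`
and every measurable `A`,
`∫_A L_f h dν = λ_f ∫ (1_A ∘ σ) h dν = λ_f μ(σ⁻¹A) = λ_f μ(A) = ∫_A λ_f h dν`,
whence `L_f h = λ_f h` `ν`-a.e. Where `h < ∞`, this equality of `ℝ≥0∞`-valued integrals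
descends to the real one.
-/

open MeasureTheory Filter Topology

noncomputable section

/-- The left shift `σ(x₁, x₂, x₃, …) = (x₂, x₃, …)`. -/
def shift {E : Type*} (x : ℕ → E) : ℕ → E := fun n => x (n + 1)

open scoped ENNReal

lemma shift_cons {E : Type*} (a : E) (x : ℕ → E) : shift (cons a x) = x := rfl

lemma continuous_cons_s18 {E : Type*} [TopologicalSpace E] :
    Continuous fun q : E × (ℕ → E) => cons q.1 q.2 := by
  refine continuous_pi fun n => ?_
  cases n with
  | zero => exact continuous_fst
  | succ k => exact (continuous_apply k).comp continuous_snd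

section Measurable

variable {E : Type*} [MeasurableSpace E]

lemma measurable_shift : Measurable (shift : (ℕ → E) → ℕ → E) :=
  measurable_pi_lambda _ fun n => measurable_pi_apply (n + 1)

lemma measurable_cons : Measurable fun q : E × (ℕ → E) => cons q.1 q.2 := by
  refine measurable_pi_lambda _ fun n => ?_
  cases n with
  | zero => exact measurable_fst
  | succ k => exact (measurable_pi_apply k).comp measurable_snd

def ruelleLintegral (p : Measure E) (f : (ℕ → E) → ℝ) (ψ : (ℕ → E) → ℝ≥0∞) (x : ℕ → E) :
    ℝ≥0∞ :=
  ∫⁻ a, ENNReal.ofReal (Real.exp (f (cons a x))) * ψ (cons a x) ∂p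

/-- The measure `L_f^* ν`. -/
def ruelleDualMeasure (p : Measure E) (f : (ℕ → E) → ℝ) (ν : Measure (ℕ → E)) :
    Measure (ℕ → E) :=
  ((p.prod ν).withDensity fun q => ENNReal.ofReal (Real.exp (f (cons q.1 q.2)))).map
    fun q => cons q.1 q.2

variable {p : Measure E} {f : (ℕ → E) → ℝ} {ψ : (ℕ → E) → ℝ≥0∞}

lemma measurable_ofReal_exp_comp_cons (hf : Measurable f) :
    Measurable fun q : E × (ℕ → E) => ENNReal.ofReal (Real.exp (f (cons q.1 q.2))) :=
  ENNReal.measurable_ofReal.comp (Real.measurable_exp.comp (hf.comp measurable_cons))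

lemma measurable_ruelleLintegral [SFinite p] (hf : Measurable f) (hψ : Measurable ψ) :
    Measurable (ruelleLintegral p f ψ) :=
  ((measurable_ofReal_exp_comp_cons hf).mul (hψ.comp measurable_cons)).lintegral_prod_left'

lemma ruelleLintegral_indicator_preimage_shift (A : Set (ℕ → E)) :
    ruelleLintegral p f ((shift ⁻¹' A).indicator ψ) = A.indicator (ruelleLintegral p f ψ) := by
  ext x
  by_cases hx : x ∈ A <;> simp [ruelleLintegral, Set.indicator, shift_cons, hx]

lemma lintegral_ruelleDualMeasure [SFinite p] {ν : Measure (ℕ → E)} [SFinite ν]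
    (hf : Measurable f) (hψ : Measurable ψ) :
    ∫⁻ x, ψ x ∂ruelleDualMeasure p f ν = ∫⁻ x, ruelleLintegral p f ψ x ∂ν := by
  have hψ' : Measurable fun q : E × (ℕ → E) => ψ (cons q.1 q.2) := hψ.comp measurable_cons
  have hprod := ((measurable_ofReal_exp_comp_cons hf).mul hψ').aemeasurable (μ := p.prod ν)
  rw [ruelleDualMeasure, lintegral_map hψ measurable_cons,
    lintegral_withDensity_eq_lintegral_mul _ (measurable_ofReal_exp_comp_cons hf) hψ',
    lintegral_prod _ hprod, lintegral_lintegral_swap hprod]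
  rfl

lemma toReal_ruelleLintegral (hf : Measurable f) (hψ : Measurable ψ) {x : ℕ → E}
    (hx : ruelleLintegral p f ψ x ≠ ∞) :
    (ruelleLintegral p f ψ x).toReal =
      ∫ a, Real.exp (f (cons a x)) * (ψ (cons a x)).toReal ∂p := by
  have hmeas : Measurable fun a => ENNReal.ofReal (Real.exp (f (cons a x))) * ψ (cons a x) :=
    ((measurable_ofReal_exp_comp_cons hf).mul (hψ.comp measurable_cons)).comp
      measurable_prodMk_right
  rw [ruelleLintegral, ← integral_toReal hmeas.aemeasurable (ae_lt_top hmeas hx)]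
  simp only [ENNReal.toReal_mul, ENNReal.toReal_ofReal (Real.exp_nonneg _)]

lemma ruelleLintegral_rnDeriv_ae_eq [SFinite p] (hf : Measurable f) {μ ν : Measure (ℕ → E)}
    [SigmaFinite μ] [SigmaFinite ν] {c : ℝ≥0∞}
    (hdual : ∀ ψ, Measurable ψ → ∫⁻ x, ruelleLintegral p f ψ x ∂ν = c * ∫⁻ x, ψ x ∂ν)
    (hinv : ∀ A : Set (ℕ → E), MeasurableSet A → μ (shift ⁻¹' A) = μ A) (hac : μ ≪ ν) :
    ruelleLintegral p f (μ.rnDeriv ν) =ᵐ[ν] fun x => c * μ.rnDeriv ν x := by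
  have hh := μ.measurable_rnDeriv ν
  refine ae_eq_of_forall_setLIntegral_eq_of_sigmaFinite (measurable_ruelleLintegral hf hh)
    (hh.const_mul c) fun A hA _ => ?_
  have hA' : MeasurableSet (shift ⁻¹' A) := measurable_shift hA
  calc ∫⁻ x in A, ruelleLintegral p f (μ.rnDeriv ν) x ∂ν
      = ∫⁻ x, ruelleLintegral p f ((shift ⁻¹' A).indicator (μ.rnDeriv ν)) x ∂ν := by
        rw [ruelleLintegral_indicator_preimage_shift, lintegral_indicator hA]
    _ = c * μ (shift ⁻¹' A) := by
        rw [hdual _ (hh.indicator hA'), lintegral_indicator hA', Measure.setLIntegral_rnDeriv hac]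
    _ = ∫⁻ x in A, c * μ.rnDeriv ν x ∂ν := by
        rw [hinv A hA, lintegral_const_mul c hh, Measure.setLIntegral_rnDeriv hac]

end Measurable

section Continuous

variable {E : Type*} [TopologicalSpace E] [TopologicalSpace.PseudoMetrizableSpace E]
  [CompactSpace E] [MeasurableSpace E] [BorelSpace E]

variable {p : Measure E} [IsFiniteMeasure p] {ν : Measure (ℕ → E)} [IsFiniteMeasure ν]
  (f : C(ℕ → E, ℝ))

lemma integrable_exp_mul_comp_cons_s18 (φ : C(ℕ → E, ℝ)) :
    Integrable (fun q : E × (ℕ → E) => Real.exp (f (cons q.1 q.2)) * φ (cons q.1 q.2))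
      (p.prod ν) :=
  (BoundedContinuousFunction.mkOfCompact ⟨_, (Real.continuous_exp.comp
    (f.continuous.comp continuous_cons_s18)).mul (φ.continuous.comp continuous_cons_s18)⟩).integrable _

instance isFiniteMeasure_ruelleDualMeasure : IsFiniteMeasure (ruelleDualMeasure p f ν) := by
  have := isFiniteMeasure_withDensity_ofReal
    (by simpa using (integrable_exp_mul_comp_cons_s18 (p := p) (ν := ν) f 1).hasFiniteIntegral)
  exact Measure.isFiniteMeasure_map _ _

lemma integral_ruelleDualMeasure (φ : C(ℕ → E, ℝ)) :
    ∫ x, φ x ∂ruelleDualMeasure p f ν =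
      ∫ x, ∫ a, Real.exp (f (cons a x)) * φ (cons a x) ∂p ∂ν := by
  rw [ruelleDualMeasure, integral_map measurable_cons.aemeasurable
      φ.continuous.aestronglyMeasurable,
    integral_withDensity_eq_integral_toReal_smul (measurable_ofReal_exp_comp_cons
      f.continuous.measurable) (ae_of_all _ fun _ => ENNReal.ofReal_lt_top)]
  simp only [ENNReal.toReal_ofReal (Real.exp_nonneg _), smul_eq_mul]
  rw [integral_prod _ (integrable_exp_mul_comp_cons_s18 f φ),
    integral_integral_swap (integrable_exp_mul_comp_cons_s18 f φ)]

lemma ruelleDualMeasure_eq_smul {c : ℝ} (hc : 0 ≤ c)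
    (h : ∀ φ : C(ℕ → E, ℝ),
      ∫ x, ∫ a, Real.exp (f (cons a x)) * φ (cons a x) ∂p ∂ν = c * ∫ x, φ x ∂ν) :
    ruelleDualMeasure p f ν = ENNReal.ofReal c • ν := by
  have := ν.smul_finite (ENNReal.ofReal_ne_top (r := c))
  refine ext_of_forall_integral_eq_of_IsFiniteMeasure fun φ => ?_
  rw [integral_smul_measure, ENNReal.toReal_ofReal hc, smul_eq_mul]
  exact (integral_ruelleDualMeasure f φ.toContinuousMap).trans (h φ.toContinuousMap)

lemma lintegral_ruelleLintegral_eq_mul {c : ℝ} (hc : 0 ≤ c)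
    (h : ∀ φ : C(ℕ → E, ℝ),
      ∫ x, ∫ a, Real.exp (f (cons a x)) * φ (cons a x) ∂p ∂ν = c * ∫ x, φ x ∂ν)
    {ψ : (ℕ → E) → ℝ≥0∞} (hψ : Measurable ψ) :
    ∫⁻ x, ruelleLintegral p f ψ x ∂ν = ENNReal.ofReal c * ∫⁻ x, ψ x ∂ν := by
  rw [← lintegral_ruelleDualMeasure f.continuous.measurable hψ, ruelleDualMeasure_eq_smul f hc h,
    lintegral_smul_measure, smul_eq_mul]

end Continuous

theorem radon_nikodym_eigenfunction_general
    {E : Type*} [MetricSpace E] [CompactSpace E] [MeasurableSpace E] [BorelSpace E]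
    (p : Measure E) [IsProbabilityMeasure p]
    (f : C(ℕ → E, ℝ))
    (T : C(ℕ → E, ℝ) →L[ℝ] C(ℕ → E, ℝ))
    (hT : ∀ (φ : C(ℕ → E, ℝ)) (x : ℕ → E),
      T φ x = ∫ a, Real.exp (f (cons a x)) * φ (cons a x) ∂p)
    (P : ℝ)
    (ν : Measure (ℕ → E)) [IsProbabilityMeasure ν]
    (hν : ∀ φ : C(ℕ → E, ℝ), ∫ x, T φ x ∂ν = Real.exp P * ∫ x, φ x ∂ν)
    (μ : Measure (ℕ → E)) [IsProbabilityMeasure μ]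
    (hinv : ∀ A : Set (ℕ → E), MeasurableSet A → μ (shift ⁻¹' A) = μ A)
    (hac : μ ≪ ν) :
    ∀ᵐ x ∂ν,
      ∫ a, Real.exp (f (cons a x)) * (μ.rnDeriv ν (cons a x)).toReal ∂p =
        Real.exp P * (μ.rnDeriv ν x).toReal := by
  have hdual (ψ : (ℕ → E) → ℝ≥0∞) (hψ : Measurable ψ) :=
    lintegral_ruelleLintegral_eq_mul f (Real.exp_pos P).le
      (fun φ => by simpa only [hT] using hν φ) hψ
  filter_upwards [ruelleLintegral_rnDeriv_ae_eq f.continuous.measurable hdual hinv hac,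
    μ.rnDeriv_lt_top ν] with x hx hfin
  have hLfin : ruelleLintegral p f (μ.rnDeriv ν) x ≠ ∞ := by
    rw [hx]
    exact ENNReal.mul_ne_top ENNReal.ofReal_ne_top hfin.ne
  rw [← toReal_ruelleLintegral f.continuous.measurable (μ.measurable_rnDeriv ν) hLfin, hx,
    ENNReal.toReal_mul, ENNReal.toReal_ofReal (Real.exp_pos P).le]

/-- **Theorem B.** Let `ν ∈ G*(f)` and let `μ` be a shift-invariant Borel
probability measure on `Ω` with `μ ≪ ν`.  Then the Radon–Nikodym derivative `h = dμ/dν` is an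
eigenfunction of the `L¹(Ω, ν)`-extension of the Ruelle operator associated to
`λ_f = exp(P(f))`: for `ν`-a.e. `x`, `∫_E exp(f(a·x)) h(a·x) dp(a) = λ_f · h(x)`. -/
theorem radon_nikodym_eigenfunction
    {E : Type*} [MetricSpace E] [CompactSpace E] [MeasurableSpace E] [BorelSpace E]
    (p : Measure E) [IsProbabilityMeasure p]
    (hp : ∀ U : Set E, IsOpen U → U.Nonempty → 0 < p U)
    (f : C(ℕ → E, ℝ))
    (T : C(ℕ → E, ℝ) →L[ℝ] C(ℕ → E, ℝ))
    (hT : ∀ (φ : C(ℕ → E, ℝ)) (x : ℕ → E),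
      T φ x = ∫ a, Real.exp (f (cons a x)) * φ (cons a x) ∂p)
    (P : ℝ)
    (hP : TendstoUniformly (fun (n : ℕ) (x : ℕ → E) => Real.log ((T ^ n) 1 x) / n)
      (fun _ => P) atTop)
    (ν : Measure (ℕ → E)) [IsProbabilityMeasure ν]
    (hν : ∀ φ : C(ℕ → E, ℝ), ∫ x, T φ x ∂ν = Real.exp P * ∫ x, φ x ∂ν)
    (μ : Measure (ℕ → E)) [IsProbabilityMeasure μ]
    (hinv : ∀ A : Set (ℕ → E), MeasurableSet A → μ (shift ⁻¹' A) = μ A)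
    (hac : μ ≪ ν) :
    ∀ᵐ x ∂ν,
      ∫ a, Real.exp (f (cons a x)) * (μ.rnDeriv ν (cons a x)).toReal ∂p =
        Real.exp P * (μ.rnDeriv ν x).toReal :=
  radon_nikodym_eigenfunction_general p f T hT P ν hν μ hinv hac
end
end
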